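/- arXiv:2508.09529 — 3 statements merged into one kernel-verified Lean document; each statement's English description precedes it below -/
import Mathlib

section
/- Suppose a twice differentiable V : ℝⁿ → ℝ satisfies the Hamilton–Jacobi equation Σᵢ fⁱ ∂ᵢV + ½ Σᵢⱼ aⁱʲ ∂ᵢV ∂ⱼV = 0, and suppose u(x) = Z(x) exp(−V(x)/ε) with Z twice differentiable satisfying the transport equation ℒ⁰Z = 0 and the second-order correction Σᵢⱼ [½ Z ∂²ᵢⱼ aⁱʲ + ∂ᵢaⁱʲ ∂ⱼZ + ½ aⁱʲ ∂²ᵢⱼZ] = 0. Then u is a stationary solution of the Fokker–Planck equation: −Σᵢ ∂ᵢ(fⁱ u) + (ε/2) Σᵢⱼ ∂²ᵢⱼ(aⁱʲ u) = 0. -/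
/-! Substituting `u = Z exp(-V/ε)` turns the Fokker–Planck operator into `exp(-V/ε)` times a
Laurent polynomial in `ε`: after symmetrising the double sums with `aⁱʲ = aʲⁱ`, the coefficient of
`ε⁻¹` is `Z` times the Hamilton–Jacobi expression, that of `ε⁰` is minus `ℒ⁰Z`, and that of `ε`
is the second-order correction, so all three vanish. -/

open Finset

/-- First-order partial derivative `∂ᵢ g` of a function on `ℝⁿ`. -/
noncomputable def pd {n : ℕ} (i : Fin n) (g : (Fin n → ℝ) → ℝ) : (Fin n → ℝ) → ℝ :=
  fun x => fderiv ℝ g x (Pi.single i 1)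

section PartialDerivatives

variable {n : ℕ} {g h V : (Fin n → ℝ) → ℝ} {x : Fin n → ℝ} (i j : Fin n)

theorem HasFDerivAt.pd_eq {g' : (Fin n → ℝ) →L[ℝ] ℝ} (hg : HasFDerivAt g g' x) :
    pd i g x = g' (Pi.single i 1) := by
  rw [pd, hg.fderiv]

theorem pd_add (hg : DifferentiableAt ℝ g x) (hh : DifferentiableAt ℝ h x) :
    pd i (fun y => g y + h y) x = pd i g x + pd i h x := by
  rw [(hg.hasFDerivAt.fun_add hh.hasFDerivAt).pd_eq, pd, pd, add_apply]

theorem pd_sub (hg : DifferentiableAt ℝ g x) (hh : DifferentiableAt ℝ h x) :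
    pd i (fun y => g y - h y) x = pd i g x - pd i h x := by
  rw [(hg.hasFDerivAt.fun_sub hh.hasFDerivAt).pd_eq, pd, pd, sub_apply]

theorem pd_mul (hg : DifferentiableAt ℝ g x) (hh : DifferentiableAt ℝ h x) :
    pd i (fun y => g y * h y) x = pd i g x * h x + g x * pd i h x := by
  rw [(hg.hasFDerivAt.fun_mul hh.hasFDerivAt).pd_eq, pd, pd]
  simp only [add_apply, smul_apply, smul_eq_mul]
  ring

theorem pd_div_const (hg : DifferentiableAt ℝ g x) (c : ℝ) :
    pd i (fun y => g y / c) x = pd i g x / c := by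
  simp only [div_eq_mul_inv]
  rw [(hg.hasFDerivAt.mul_const c⁻¹).pd_eq, pd, smul_apply, smul_eq_mul, mul_comm]

theorem contDiff_pd {k : WithTop ℕ∞} (hg : ContDiff ℝ (k + 1) g) : ContDiff ℝ k (pd i g) :=
  (ContinuousLinearMap.apply ℝ ℝ (Pi.single i 1 : Fin n → ℝ)).contDiff.comp
    (hg.fderiv_right le_rfl)

theorem differentiable_pd (hg : ContDiff ℝ 2 g) : Differentiable ℝ (pd i g) :=
  (contDiff_pd i hg).differentiable one_ne_zero

theorem pd_pd_mul (hg : ContDiff ℝ 2 g) (hh : ContDiff ℝ 2 h) :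
    pd i (pd j (fun y => g y * h y)) x
      = pd i (pd j g) x * h x + pd j g x * pd i h x + pd i g x * pd j h x
        + g x * pd i (pd j h) x := by
  have hg' := hg.differentiable two_ne_zero
  have hh' := hh.differentiable two_ne_zero
  have hgj := differentiable_pd j hg
  have hhj := differentiable_pd j hh
  have hj : pd j (fun y => g y * h y) = fun y => pd j g y * h y + g y * pd j h y :=
    funext fun y => pd_mul j (hg' y) (hh' y)
  rw [hj, pd_add i (by fun_prop) (by fun_prop), pd_mul i (hgj x) (hh' x), pd_mul i (hg' x) (hhj x)]
  ring

theorem pd_exp_neg_div (ε : ℝ) (hV : DifferentiableAt ℝ V x) :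
    pd i (fun y => Real.exp (-V y / ε)) x = -(pd i V x / ε) * Real.exp (-V x / ε) := by
  simp only [div_eq_mul_inv]
  rw [(hV.hasFDerivAt.fun_neg.mul_const ε⁻¹).exp.pd_eq, pd]
  simp only [smul_apply, neg_apply, smul_eq_mul]
  ring

theorem pd_mul_exp_neg_div (ε : ℝ) (hg : DifferentiableAt ℝ g x) (hV : DifferentiableAt ℝ V x) :
    pd i (fun y => g y * Real.exp (-V y / ε)) x
      = (pd i g x - g x * pd i V x / ε) * Real.exp (-V x / ε) := by
  rw [pd_mul i hg (by fun_prop), pd_exp_neg_div i ε hV]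
  ring

theorem pd_pd_mul_exp_neg_div (ε : ℝ) (hg : ContDiff ℝ 2 g) (hV : ContDiff ℝ 2 V) :
    pd i (pd j (fun y => g y * Real.exp (-V y / ε))) x
      = (pd i (pd j g) x
          - (pd i g x * pd j V x + pd j g x * pd i V x + g x * pd i (pd j V) x) / ε
          + g x * pd i V x * pd j V x / ε ^ 2) * Real.exp (-V x / ε) := by
  have hg' := hg.differentiable two_ne_zero
  have hV' := hV.differentiable two_ne_zero
  have hgj := differentiable_pd j hg
  have hVj := differentiable_pd j hV
  have hj : pd j (fun y => g y * Real.exp (-V y / ε))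
      = fun y => (pd j g y - g y * pd j V y / ε) * Real.exp (-V y / ε) :=
    funext fun y => pd_mul_exp_neg_div j ε (hg' y) (hV' y)
  rw [hj, pd_mul_exp_neg_div i ε (by fun_prop) (hV' x), pd_sub i (hgj x) (by fun_prop),
    pd_div_const i (by fun_prop), pd_mul i (hg' x) (hVj x)]
  field_simp
  ring

end PartialDerivatives

section WKBAnsatz

variable {n : ℕ} {c Z V : (Fin n → ℝ) → ℝ} {x : Fin n → ℝ} (i j : Fin n) (ε : ℝ)

theorem pd_mul_mul_exp_neg_div (hc : DifferentiableAt ℝ c x) (hZ : DifferentiableAt ℝ Z x)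
    (hV : DifferentiableAt ℝ V x) :
    pd i (fun y => c y * (Z y * Real.exp (-V y / ε))) x
      = (pd i c x * Z x + c x * pd i Z x - Z x / ε * (c x * pd i V x)) * Real.exp (-V x / ε) := by
  simp only [← mul_assoc]
  rw [pd_mul_exp_neg_div i ε (by fun_prop) hV, pd_mul i hc hZ]
  ring

theorem pd_pd_mul_mul_exp_neg_div (hc : ContDiff ℝ 2 c) (hZ : ContDiff ℝ 2 Z) (hV : ContDiff ℝ 2 V) :
    pd i (pd j (fun y => c y * (Z y * Real.exp (-V y / ε)))) x
      = (pd i (pd j c) x * Z x + pd j c x * pd i Z x + pd i c x * pd j Z x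
          + c x * pd i (pd j Z) x
          - ((pd i c x * Z x + c x * pd i Z x) * pd j V x
            + (pd j c x * Z x + c x * pd j Z x) * pd i V x
            + c x * Z x * pd i (pd j V) x) / ε
          + c x * Z x * pd i V x * pd j V x / ε ^ 2) * Real.exp (-V x / ε) := by
  have hc' := hc.differentiable two_ne_zero
  have hZ' := hZ.differentiable two_ne_zero
  simp only [← mul_assoc]
  rw [pd_pd_mul_exp_neg_div i j ε (hc.mul hZ) hV, pd_pd_mul i j hc hZ,
    pd_mul i (hc' x) (hZ' x), pd_mul j (hc' x) (hZ' x)]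

end WKBAnsatz

theorem Finset.sum_sum_eq_of_add_swap {ι M : Type*} [Fintype ι] [AddCommMonoid M]
    [IsAddTorsionFree M] {S T : ι → ι → M} (h : ∀ i j, S i j + S j i = T i j + T j i) :
    ∑ i, ∑ j, S i j = ∑ i, ∑ j, T i j := by
  have hsym (R : ι → ι → M) : 2 • ∑ i, ∑ j, R i j = ∑ i, ∑ j, (R i j + R j i) := by
    rw [two_nsmul]
    nth_rw 2 [Finset.sum_comm]
    simp only [← Finset.sum_add_distrib]
  rw [← nsmul_right_inj two_ne_zero, hsym, hsym]
  simp only [h]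

/-- If `V` solves the Hamilton–Jacobi equation, `Z` solves the transport equation
`ℒ⁰Z = 0` and the second-order correction equation, then
`u = Z exp(−V/ε)` is a stationary solution of the Fokker–Planck equation. -/
theorem wkb_stationary_fokker_planck
    (n : ℕ) (ε : ℝ) (hε : 0 < ε)
    (f : Fin n → (Fin n → ℝ) → ℝ) (hf : ∀ i, ContDiff ℝ 1 (f i))
    (a : Fin n → Fin n → (Fin n → ℝ) → ℝ) (ha : ∀ i j, ContDiff ℝ 2 (a i j))
    (hsymm : ∀ i j, a i j = a j i)
    (V : (Fin n → ℝ) → ℝ) (hV : ContDiff ℝ 2 V)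
    (Z : (Fin n → ℝ) → ℝ) (hZ : ContDiff ℝ 2 Z)
    (hHJ : ∀ x, ∑ i, f i x * pd i V x
        + (1 / 2) * ∑ i, ∑ j, a i j x * pd i V x * pd j V x = 0)
    (htransport : ∀ x,
      (∑ i, (f i x + ∑ j, a i j x * pd j V x) * pd i Z x)
        + ((∑ i, pd i (f i) x) + (1 / 2) * ∑ i, ∑ j, a i j x * pd i (pd j V) x
            + ∑ i, ∑ j, pd i (a i j) x * pd j V x) * Z x = 0)
    (hsecond : ∀ x, ∑ i, ∑ j,
        ((1 / 2) * Z x * pd i (pd j (a i j)) x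
          + pd i (a i j) x * pd j Z x
          + (1 / 2) * a i j x * pd i (pd j Z) x) = 0)
    (u : (Fin n → ℝ) → ℝ) (hu : u = fun x => Z x * Real.exp (-V x / ε)) :
    ∀ x, -(∑ i, pd i (fun y => f i y * u y) x)
        + (ε / 2) * ∑ i, ∑ j, pd i (pd j (fun y => a i j y * u y)) x = 0 := by
  intro x
  subst hu
  have hdrift (i : Fin n) := pd_mul_mul_exp_neg_div i ε ((hf i).differentiable one_ne_zero x)
    (hZ.differentiable two_ne_zero x) (hV.differentiable two_ne_zero x)
  have hdiffusion (i j : Fin n) := pd_pd_mul_mul_exp_neg_div i j ε (x := x) (ha i j) hZ hV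
  simp only [hdrift, hdiffusion, Finset.mul_sum]
  -- the symmetrised second-order summand, written in the monomials of the three hypotheses
  rw [Finset.sum_sum_eq_of_add_swap (T := fun i j => Real.exp (-V x / ε) *
      (ε * ((1 / 2) * Z x * pd i (pd j (a i j)) x + pd i (a i j) x * pd j Z x
          + (1 / 2) * a i j x * pd i (pd j Z) x)
        - (a i j x * pd j V x * pd i Z x + (1 / 2) * Z x * (a i j x * pd i (pd j V) x)
          + Z x * (pd i (a i j) x * pd j V x))
        + Z x / ε * ((1 / 2) * (a i j x * pd i V x * pd j V x))))]
  · have hHJx := hHJ x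
    have htransportx := htransport x
    have hsecondx := hsecond x
    -- pull the constants out of all sums, so that the sums become common atoms for `ring`
    simp only [mul_add, add_mul, Finset.sum_add_distrib, Finset.sum_sub_distrib,
      ← Finset.sum_mul, ← Finset.mul_sum] at hHJx htransportx hsecondx ⊢
    linear_combination Real.exp (-V x / ε) * (Z x / ε * hHJx - htransportx + ε * hsecondx)
  · intro i j
    rw [hsymm j i]
    field_simp [hε.ne']
    ring
end

section
/- The symplectic Euler map for a smooth Hamiltonian H(p,q) on ℝ²ⁿ, defined implicitly by p' = p − h ∇_q H(p, q'), q' = q + h ∇_p H(p, q'), is symplectic: wherever it is well-defined and differentiable, its Jacobian g' satisfies ω(g'ξ, g'η) = ω(ξ, η) for all ξ, η ∈ ℝ²ⁿ, where ω is the standard symplectic form ω(ξ,η) = Σᵢ (ξ_{p_i} η_{q_i} − ξ_{q_i} η_{p_i}). -/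
/-!
The symplectic Euler map `g` is characterised by `g z = S(z, (g z).2)`, where
`S((p, q), q') = (p - h ∇_q H(p, q'), q + h ∇_p H(p, q'))`. Differentiating this relation, the
Jacobian sends `ξ` to the `ξ'` obtained by the same kind of step for the linear covector field
`u ↦ B u`, `B` the Hessian of `H` at `(p, (g z).2)`, with gradients taken at the mixed vector
`u = (ξ_p, ξ'_q)`. In these mixed variables `ω(ξ', η') - ω(ξ, η) = h (B(u', u) - B(u, u'))`,
which vanishes because the Hessian is symmetric.
-/

open Finset

/-- The standard symplectic form on `ℝⁿ × ℝⁿ`: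
`ω(ξ,η) = Σᵢ (ξ_{pᵢ} η_{qᵢ} − ξ_{qᵢ} η_{pᵢ})`. -/
def sympForm {n : ℕ} (ξ η : (Fin n → ℝ) × (Fin n → ℝ)) : ℝ :=
  ∑ i, (ξ.1 i * η.2 i - ξ.2 i * η.1 i)

/-- The `i`-th component of the gradient of `H` in the `p`-variable. -/
noncomputable def gradP {n : ℕ} (H : (Fin n → ℝ) × (Fin n → ℝ) → ℝ)
    (z : (Fin n → ℝ) × (Fin n → ℝ)) (i : Fin n) : ℝ :=
  fderiv ℝ H z (Pi.single i 1, 0)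

/-- The `i`-th component of the gradient of `H` in the `q`-variable. -/
noncomputable def gradQ {n : ℕ} (H : (Fin n → ℝ) × (Fin n → ℝ) → ℝ)
    (z : (Fin n → ℝ) × (Fin n → ℝ)) (i : Fin n) : ℝ :=
  fderiv ℝ H z (0, Pi.single i 1)

open Filter Topology ContinuousLinearMap

abbrev PhaseSpace (n : ℕ) := (Fin n → ℝ) × (Fin n → ℝ)

section

variable {n : ℕ}

noncomputable def coordsP : (PhaseSpace n →L[ℝ] ℝ) →L[ℝ] (Fin n → ℝ) :=
  pi fun i => apply ℝ ℝ (Pi.single i 1, 0)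

noncomputable def coordsQ : (PhaseSpace n →L[ℝ] ℝ) →L[ℝ] (Fin n → ℝ) :=
  pi fun i => apply ℝ ℝ (0, Pi.single i 1)

theorem sum_mul_coordsP_add_mul_coordsQ (ℓ : PhaseSpace n →L[ℝ] ℝ) (v : PhaseSpace n) :
    ∑ i, (v.1 i * coordsP ℓ i + v.2 i * coordsQ ℓ i) = ℓ v := by
  have hv : v = ∑ i, (inl ℝ _ _ (Pi.single i (v.1 i)) + inr ℝ _ _ (Pi.single i (v.2 i))) := by
    rw [sum_add_distrib, ← map_sum, ← map_sum, univ_sum_single, univ_sum_single]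
    simp
  have hsingle (i : Fin n) (c : ℝ) : Pi.single i c = c • Pi.single i (1 : ℝ) := by
    rw [← Pi.single_smul, smul_eq_mul, mul_one]
  conv_rhs => rw [hv, map_sum]
  refine sum_congr rfl fun i _ => ?_
  rw [hsingle i (v.1 i), hsingle i (v.2 i), map_add, map_smul, map_smul, map_smul, map_smul]
  rfl

noncomputable def eulerStep (F : PhaseSpace n → PhaseSpace n →L[ℝ] ℝ) (h : ℝ) (z : PhaseSpace n)
    (q' : Fin n → ℝ) : PhaseSpace n :=
  (z.1 - h • coordsQ (F (z.1, q')), z.2 + h • coordsP (F (z.1, q')))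

theorem sympForm_eq_of_eq_eulerStep (B : PhaseSpace n →L[ℝ] PhaseSpace n →L[ℝ] ℝ)
    (hB : ∀ u v, B u v = B v u) (h : ℝ) {ξ η ξ' η' : PhaseSpace n}
    (hξ : ξ' = eulerStep B h ξ ξ'.2) (hη : η' = eulerStep B h η η'.2) :
    sympForm ξ' η' = sympForm ξ η := by
  have key : sympForm ξ' η' - sympForm ξ η =
      h * (B (η.1, η'.2) (ξ.1, ξ'.2) - B (ξ.1, ξ'.2) (η.1, η'.2)) := by
    rw [← sum_mul_coordsP_add_mul_coordsQ, ← sum_mul_coordsP_add_mul_coordsQ]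
    obtain ⟨hξ₁, hξ₂⟩ := Prod.ext_iff.mp hξ
    obtain ⟨hη₁, hη₂⟩ := Prod.ext_iff.mp hη
    simp only [eulerStep] at hξ₁ hξ₂ hη₁ hη₂
    simp only [sympForm, mul_sum, ← sum_sub_distrib]
    refine sum_congr rfl fun i _ => ?_
    have e₁ := congrFun hξ₁ i
    have e₂ := congrFun hξ₂ i
    have e₃ := congrFun hη₁ i
    have e₄ := congrFun hη₂ i
    simp only [Pi.sub_apply, Pi.add_apply, Pi.smul_apply, smul_eq_mul] at e₁ e₂ e₃ e₄ ⊢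
    linear_combination η'.2 i * e₁ - ξ'.2 i * e₃ + ξ.1 i * e₄ - η.1 i * e₂
  rwa [hB, sub_self, mul_zero, sub_eq_zero] at key

theorem eulerStep_fderiv (H : PhaseSpace n → ℝ) (h : ℝ) (z : PhaseSpace n) (q' : Fin n → ℝ) :
    eulerStep (fderiv ℝ H) h z q' =
      (z.1 - h • fun i => gradQ H (z.1, q') i, z.2 + h • fun i => gradP H (z.1, q') i) :=
  rfl

theorem fderiv_eulerStep_apply {F : PhaseSpace n → PhaseSpace n →L[ℝ] ℝ}
    {F' : PhaseSpace n →L[ℝ] PhaseSpace n →L[ℝ] ℝ} {G : PhaseSpace n → Fin n → ℝ}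
    {G' : PhaseSpace n →L[ℝ] Fin n → ℝ} {z : PhaseSpace n} (hF : HasFDerivAt F F' (z.1, G z))
    (hG : HasFDerivAt G G' z) (h : ℝ) (ζ : PhaseSpace n) :
    fderiv ℝ (fun y => eulerStep F h y (G y)) z ζ = eulerStep F' h ζ (G' ζ) := by
  have hFG : HasFDerivAt (fun y : PhaseSpace n => F (y.1, G y)) (F'.comp ((fst ℝ _ _).prod G')) z :=
    hF.comp z (hasFDerivAt_fst.prodMk hG)
  have hstep : HasFDerivAt (fun y => eulerStep F h y (G y)) _ z :=
    (hasFDerivAt_fst.sub ((coordsQ.hasFDerivAt.comp z hFG).const_smul h)).prodMk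
      (hasFDerivAt_snd.add ((coordsP.hasFDerivAt.comp z hFG).const_smul h))
  rw [hstep.fderiv]
  rfl

theorem fderiv_apply_eq_eulerStep {H : PhaseSpace n → ℝ} {g : PhaseSpace n → PhaseSpace n}
    {z : PhaseSpace n} {h : ℝ} (hH : DifferentiableAt ℝ (fderiv ℝ H) (z.1, (g z).2))
    (hg : DifferentiableAt ℝ g z)
    (himpl : g =ᶠ[𝓝 z] fun y => eulerStep (fderiv ℝ H) h y (g y).2) (ζ : PhaseSpace n) :
    fderiv ℝ g z ζ =
      eulerStep (fderiv ℝ (fderiv ℝ H) (z.1, (g z).2)) h ζ (fderiv ℝ g z ζ).2 := by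
  have := fderiv_eulerStep_apply hH.hasFDerivAt hg.hasFDerivAt.snd h ζ
  rwa [← himpl.fderiv_eq] at this

end

theorem symplectic_euler_is_symplectic_general
    (n : ℕ) (H : (Fin n → ℝ) × (Fin n → ℝ) → ℝ) (hH : ContDiff ℝ 2 H)
    (h : ℝ)
    (U : Set ((Fin n → ℝ) × (Fin n → ℝ))) (hU : IsOpen U)
    (g : (Fin n → ℝ) × (Fin n → ℝ) → (Fin n → ℝ) × (Fin n → ℝ))
    (hg : ∀ z ∈ U, DifferentiableAt ℝ g z)
    (himpl : ∀ z ∈ U,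
      (g z).1 = z.1 - h • (fun i => gradQ H (z.1, (g z).2) i)
        ∧ (g z).2 = z.2 + h • (fun i => gradP H (z.1, (g z).2) i)) :
    ∀ z ∈ U, ∀ ξ η : (Fin n → ℝ) × (Fin n → ℝ),
      sympForm (fderiv ℝ g z ξ) (fderiv ℝ g z η) = sympForm ξ η := by
  intro z hz ξ η
  have hstep : g =ᶠ[𝓝 z] fun y => eulerStep (fderiv ℝ H) h y (g y).2 := by
    filter_upwards [hU.mem_nhds hz] with y hy
    rw [eulerStep_fderiv]
    exact Prod.ext (himpl y hy).1 (himpl y hy).2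
  have hH' : DifferentiableAt ℝ (fderiv ℝ H) (z.1, (g z).2) :=
    (hH.fderiv_right one_add_one_eq_two.le).differentiable one_ne_zero _
  exact sympForm_eq_of_eq_eulerStep _ (hH.contDiffAt.isSymmSndFDerivAt (by simp)) h
    (fderiv_apply_eq_eulerStep hH' (hg z hz) hstep ξ)
    (fderiv_apply_eq_eulerStep hH' (hg z hz) hstep η)

/-- The symplectic Euler map `p' = p − h∇_qH(p,q')`, `q' = q + h∇_pH(p,q')` is
symplectic: wherever it is defined and differentiable, its Jacobian preserves
the standard symplectic form. -/
theorem symplectic_euler_is_symplectic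
    (n : ℕ) (H : (Fin n → ℝ) × (Fin n → ℝ) → ℝ) (hH : ContDiff ℝ 2 H)
    (h : ℝ) (hh : 0 < h)
    (U : Set ((Fin n → ℝ) × (Fin n → ℝ))) (hU : IsOpen U)
    (g : (Fin n → ℝ) × (Fin n → ℝ) → (Fin n → ℝ) × (Fin n → ℝ))
    (hg : ∀ z ∈ U, DifferentiableAt ℝ g z)
    (himpl : ∀ z ∈ U,
      (g z).1 = z.1 - h • (fun i => gradQ H (z.1, (g z).2) i)
        ∧ (g z).2 = z.2 + h • (fun i => gradP H (z.1, (g z).2) i)) :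
    ∀ z ∈ U, ∀ ξ η : (Fin n → ℝ) × (Fin n → ℝ),
      sympForm (fderiv ℝ g z ξ) (fderiv ℝ g z η) = sympForm ξ η :=
  symplectic_euler_is_symplectic_general n H hH h U hU g hg himpl
end

section
/- For the figure-eight Hamiltonian system with dissipation, the function V = μH² is an exact solution of the Hamilton–Jacobi equation with identity diffusion: for f = (H_y − μ H H_x, −H_x − μ H H_y) and A = I₂, one has f·∇V + ½|∇V|² = 0, where H(x,y) = ½y² + x⁴/12 − x²/2 and μ > 0. -/
/-!
Since `∇V = 2μH ∇H`, the drift splits as `f = J∇H − ½∇V` with `J` the rotation by `−π/2`.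
The Hamiltonian part `J∇H` is orthogonal to `∇H`, hence to `∇V`, so `f·∇V = −½|∇V|²`.
Only the chain rule for `V = μH²` is needed, not the particular shape of `H`.
-/

theorem deriv_const_mul_sq {g : ℝ → ℝ} {x : ℝ} (μ : ℝ) (hg : DifferentiableAt ℝ g x) :
    deriv (fun s => μ * g s ^ 2) x = 2 * μ * g x * deriv g x :=
  ((hg.hasDerivAt.pow 2).const_mul μ).deriv.trans (by ring)

theorem hamiltonJacobi_dissipativeDrift (μ h p q : ℝ) :
    (q - μ * h * p) * (2 * μ * h * p) + (-p - μ * h * q) * (2 * μ * h * q)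
      + (1 / 2) * ((2 * μ * h * p) ^ 2 + (2 * μ * h * q) ^ 2) = 0 := by
  ring

theorem figure_eight_quasipotential_general (μ : ℝ)
    (H : ℝ → ℝ → ℝ) (hH : H = fun x y => (1 / 2) * y ^ 2 + (1 / 12) * x ^ 4 - (1 / 2) * x ^ 2)
    (Hx Hy : ℝ → ℝ → ℝ)
    (hHx : Hx = fun x y => deriv (fun s => H s y) x)
    (hHy : Hy = fun x y => deriv (fun s => H x s) y)
    (f₁ f₂ : ℝ → ℝ → ℝ)
    (hf₁ : f₁ = fun x y => Hy x y - μ * H x y * Hx x y)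
    (hf₂ : f₂ = fun x y => -Hx x y - μ * H x y * Hy x y)
    (V : ℝ → ℝ → ℝ) (hV : V = fun x y => μ * (H x y) ^ 2)
    (Vx Vy : ℝ → ℝ → ℝ)
    (hVx : Vx = fun x y => deriv (fun s => V s y) x)
    (hVy : Vy = fun x y => deriv (fun s => V x s) y) :
    ∀ x y : ℝ,
      f₁ x y * Vx x y + f₂ x y * Vy x y
        + (1 / 2) * ((Vx x y) ^ 2 + (Vy x y) ^ 2) = 0 := by
  subst hHx hHy hf₁ hf₂ hV hVx hVy
  intro x y
  have hx : DifferentiableAt ℝ (fun s => H s y) x := by subst hH; fun_prop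
  have hy : DifferentiableAt ℝ (fun s => H x s) y := by subst hH; fun_prop
  beta_reduce
  rw [deriv_const_mul_sq μ hx, deriv_const_mul_sq μ hy]
  exact hamiltonJacobi_dissipativeDrift μ (H x y) _ _

/-- For the figure-eight system with Hamiltonian `H(x,y) = ½y² + x⁴/12 − x²/2`,
drift `f = (H_y − μ H H_x, −H_x − μ H H_y)` and identity diffusion, the function
`V = μ H²` solves the Hamilton–Jacobi equation `f·∇V + ½|∇V|² = 0`. -/
theorem figure_eight_quasipotential (μ : ℝ) (hμ : 0 < μ)
    (H : ℝ → ℝ → ℝ) (hH : H = fun x y => (1 / 2) * y ^ 2 + (1 / 12) * x ^ 4 - (1 / 2) * x ^ 2)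
    (Hx Hy : ℝ → ℝ → ℝ)
    (hHx : Hx = fun x y => deriv (fun s => H s y) x)
    (hHy : Hy = fun x y => deriv (fun s => H x s) y)
    (f₁ f₂ : ℝ → ℝ → ℝ)
    (hf₁ : f₁ = fun x y => Hy x y - μ * H x y * Hx x y)
    (hf₂ : f₂ = fun x y => -Hx x y - μ * H x y * Hy x y)
    (V : ℝ → ℝ → ℝ) (hV : V = fun x y => μ * (H x y) ^ 2)
    (Vx Vy : ℝ → ℝ → ℝ)
    (hVx : Vx = fun x y => deriv (fun s => V s y) x)
    (hVy : Vy = fun x y => deriv (fun s => V x s) y) :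
    ∀ x y : ℝ,
      f₁ x y * Vx x y + f₂ x y * Vy x y
        + (1 / 2) * ((Vx x y) ^ 2 + (Vy x y) ^ 2) = 0 :=
  figure_eight_quasipotential_general μ H hH Hx Hy hHx hHy f₁ f₂ hf₁ hf₂ V hV Vx Vy hVx hVy
end
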